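/- Let V be a ℤ/2-graded finite-dimensional vector space and A an odd endomorphism. In the superalgebra End(V)[θ,θ'] with two odd square-zero anticommuting generators θ, θ' that also anticommute with odd endomorphisms (so θA = -Aθ etc.), the super parallel transport (t,θ) ↦ e^{-tA² + θA} := (1 + θA)e^{-tA²} is a homomorphism from ℝ^{1|1} with its group law to GL(V): ((1 + θA)e^{-tA²})·((1 + θ'A)e^{-t'A²}) = (1 + (θ + θ')A)·e^{-(t + t' + θθ')A²}, where e^{-(t+t'+θθ')A²} = e^{-(t+t')A²}(1 - θθ'A²). -/
import Mathlib


/-- The super parallel transport (t,θ) ↦ e^{-tA²+θA} = (1+θA)e^{-tA²} is a group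
homomorphism ℝ^{1|1} → GL(V).  Work in the superalgebra R = End(V)[θ,θ'] with two odd
square-zero anticommuting generators θ, θ' which anticommute with the odd endomorphism
A; E t stands for e^{-tA²}, which satisfies the exponential law and commutes with
θ, θ' and A (A² being even).  Then
((1+θA)e^{-tA²})((1+θ'A)e^{-t'A²}) = (1+(θ+θ')A)e^{-(t+t')A²}(1-θθ'A²),
the right-hand side being e^{-(t+t'+θθ')A²+(θ+θ')A}. -/
theorem stmt15 {R : Type*} [Ring R] (A θ θ' : R) (E : ℝ → R)
    (hθ : θ * θ = 0) (hθ' : θ' * θ' = 0) (hanti : θ * θ' = -(θ' * θ))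
    (hAθ : A * θ = -(θ * A)) (hAθ' : A * θ' = -(θ' * A))
    (hE : ∀ s s', E s * E s' = E (s + s'))
    (hEθ : ∀ s, E s * θ = θ * E s) (hEθ' : ∀ s, E s * θ' = θ' * E s)
    (hEA : ∀ s, E s * A = A * E s) :
    ∀ t t' : ℝ,
      ((1 + θ * A) * E t) * ((1 + θ' * A) * E t') =
        (1 + (θ + θ') * A) * (E (t + t') * (1 - θ * θ' * (A * A))) := by
  intro t t'
  have h1 : θ * A * (θ' * A) = -(θ * θ' * (A * A)) := by
    calc θ * A * (θ' * A) = θ * (A * θ') * A := by noncomm_ring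
    _ = θ * (-(θ' * A)) * A := by rw [hAθ']
    _ = -(θ * θ' * (A * A)) := by noncomm_ring
  have h2 : θ * A * (θ * θ' * (A * A)) = 0 := by
    calc θ * A * (θ * θ' * (A * A)) = θ * (A * θ) * θ' * (A * A) := by noncomm_ring
    _ = θ * (-(θ * A)) * θ' * (A * A) := by rw [hAθ]
    _ = -(θ * θ * (A * θ' * (A * A))) := by noncomm_ring
    _ = 0 := by rw [hθ]; noncomm_ring
  have h3 : θ' * A * (θ * θ' * (A * A)) = 0 := by
    calc θ' * A * (θ * θ' * (A * A)) = θ' * (A * θ) * θ' * (A * A) := by noncomm_ring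
    _ = θ' * (-(θ * A)) * θ' * (A * A) := by rw [hAθ]
    _ = -(θ' * θ * (A * θ') * (A * A)) := by noncomm_ring
    _ = -(θ' * θ * (-(θ' * A)) * (A * A)) := by rw [hAθ']
    _ = θ' * (θ * θ') * (A * (A * A)) := by noncomm_ring
    _ = θ' * (-(θ' * θ)) * (A * (A * A)) := by rw [hanti]
    _ = -(θ' * θ' * (θ * (A * (A * A)))) := by noncomm_ring
    _ = 0 := by rw [hθ']; noncomm_ring
  calc ((1 + θ * A) * E t) * ((1 + θ' * A) * E t')
      = (1 + θ * A) * (E t * (1 + θ' * A)) * E t' := by noncomm_ring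
    _ = (1 + θ * A) * ((1 + θ' * A) * E t) * E t' := by
        congr 1; congr 1
        calc E t * (1 + θ' * A) = E t + E t * θ' * A := by noncomm_ring
        _ = E t + θ' * (E t * A) := by rw [hEθ']; noncomm_ring
        _ = E t + θ' * (A * E t) := by rw [hEA]
        _ = (1 + θ' * A) * E t := by noncomm_ring
    _ = (1 + θ * A) * (1 + θ' * A) * (E t * E t') := by noncomm_ring
    _ = (1 + θ * A + θ' * A + θ * A * (θ' * A)) * E (t + t') := by rw [hE]; noncomm_ring
    _ = (1 + θ * A + θ' * A - θ * θ' * (A * A)) * E (t + t') := by rw [h1]; noncomm_ring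
    _ = (1 + (θ + θ') * A) * ((1 - θ * θ' * (A * A)) * E (t + t')) := by
        calc (1 + θ * A + θ' * A - θ * θ' * (A * A)) * E (t + t')
            = ((1 + (θ + θ') * A) * (1 - θ * θ' * (A * A))
               + θ * A * (θ * θ' * (A * A)) + θ' * A * (θ * θ' * (A * A))) * E (t + t') := by
              noncomm_ring
          _ = ((1 + (θ + θ') * A) * (1 - θ * θ' * (A * A))) * E (t + t') := by
              rw [h2, h3]; noncomm_ring
          _ = (1 + (θ + θ') * A) * ((1 - θ * θ' * (A * A)) * E (t + t')) := by noncomm_ring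
    _ = (1 + (θ + θ') * A) * (E (t + t') * (1 - θ * θ' * (A * A))) := by
        congr 1
        calc (1 - θ * θ' * (A * A)) * E (t + t')
            = E (t + t') - θ * (θ' * (A * (A * E (t + t')))) := by noncomm_ring
          _ = E (t + t') - θ * (θ' * (A * (E (t + t') * A))) := by rw [hEA]
          _ = E (t + t') - θ * (θ' * ((A * E (t + t')) * A)) := by noncomm_ring
          _ = E (t + t') - θ * (θ' * ((E (t + t') * A) * A)) := by rw [hEA]
          _ = E (t + t') - θ * ((θ' * E (t + t')) * (A * A)) := by noncomm_ring
          _ = E (t + t') - θ * ((E (t + t') * θ') * (A * A)) := by rw [hEθ']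
          _ = E (t + t') - (θ * E (t + t')) * (θ' * (A * A)) := by noncomm_ring
          _ = E (t + t') - (E (t + t') * θ) * (θ' * (A * A)) := by rw [hEθ]
          _ = E (t + t') * (1 - θ * θ' * (A * A)) := by noncomm_ring
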